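/- Let G be a lcsc group acting transitively and properly on a Borel space S with a point c ∈ S whose stabilizer is compact. If ν is any σ-finite G-invariant measure on S, then ν is a constant multiple of μ_c = λ ∘ π_c⁻¹. -/

import Mathlib

/-!
Write `K s = ∫ k (g • s) dλ(g)`. For a `G`-invariant s-finite measure `ρ`, Tonelli and invariance
turn `∫ F s * K s dρ` into `∫ (∫ F (g⁻¹ • t) dλ(g)) * k t dρ(t)`, and by transitivity and left
invariance of `λ` the inner integral does not depend on `t`. Taking `F = 1_A / K` (possible since
`0 < K < ∞` by properness) gives `ρ A = c_A * ∫ k dρ` with `c_A` independent of `ρ`, so any two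
such measures are proportional. The measure `μ_c` is one of them, and `∫ k dμ_c = K c ∈ (0, ∞)`.
-/

open MeasureTheory ENNReal

theorem lintegral_ne_zero_of_forall_pos {α : Type*} [MeasurableSpace α] {μ : Measure α}
    [NeZero μ] {f : α → ℝ≥0∞} (hf : AEMeasurable f μ) (hpos : ∀ x, 0 < f x) :
    ∫⁻ x, f x ∂μ ≠ 0 := by
  rw [Ne, lintegral_eq_zero_iff' hf]
  intro h
  obtain ⟨x, hx⟩ := h.exists
  exact (hpos x).ne' hx

section

variable {G S : Type*} [Group G] [MeasurableSpace G] [MulAction G S]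

theorem lintegral_comp_inv_smul_eq [MeasurableMul G] [MulAction.IsPretransitive G S]
    (lam : Measure G) [lam.IsMulLeftInvariant] (F : S → ℝ≥0∞) (s t : S) :
    ∫⁻ g, F (g⁻¹ • t) ∂lam = ∫⁻ g, F (g⁻¹ • s) ∂lam := by
  obtain ⟨g₀, rfl⟩ := MulAction.exists_smul_eq G s t
  rw [← lintegral_mul_left_eq_self _ g₀]
  simp only [mul_inv_rev, mul_smul, inv_smul_smul]

variable [MeasurableSpace S] [MeasurableSMul₂ G S]

theorem lintegral_mul_lintegral_comp_smul [MeasurableInv G] (lam : Measure G) [SFinite lam]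
    (ρ : Measure S) [SFinite ρ] (hρ : ∀ g : G, ρ.map (g • ·) = ρ)
    {F h : S → ℝ≥0∞} (hF : Measurable F) (hh : Measurable h) :
    ∫⁻ s, F s * ∫⁻ g, h (g • s) ∂lam ∂ρ = ∫⁻ t, (∫⁻ g, F (g⁻¹ • t) ∂lam) * h t ∂ρ := by
  calc ∫⁻ s, F s * ∫⁻ g, h (g • s) ∂lam ∂ρ
      = ∫⁻ s, ∫⁻ g, F s * h (g • s) ∂lam ∂ρ :=
        lintegral_congr fun s => (lintegral_const_mul _ (by fun_prop)).symm
    _ = ∫⁻ g, ∫⁻ s, F s * h (g • s) ∂ρ ∂lam :=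
        lintegral_lintegral_swap (Measurable.aemeasurable (by fun_prop))
    _ = ∫⁻ g, ∫⁻ t, F (g⁻¹ • t) * h t ∂ρ ∂lam := by
        refine lintegral_congr fun g => ?_
        conv_rhs => rw [← hρ g, lintegral_map (by fun_prop) (by fun_prop)]
        simp only [inv_smul_smul]
    _ = ∫⁻ t, ∫⁻ g, F (g⁻¹ • t) * h t ∂lam ∂ρ :=
        lintegral_lintegral_swap (Measurable.aemeasurable (by fun_prop))
    _ = ∫⁻ t, (∫⁻ g, F (g⁻¹ • t) ∂lam) * h t ∂ρ :=
        lintegral_congr fun t => lintegral_mul_const _ (by fun_prop)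

variable [MeasurableMul G] [MeasurableInv G] [MulAction.IsPretransitive G S]
  (lam : Measure G) [SFinite lam] [lam.IsMulLeftInvariant] {k : S → ℝ≥0∞}

theorem measure_eq_mul_lintegral (hk : Measurable k)
    (hK₀ : ∀ s, ∫⁻ g, k (g • s) ∂lam ≠ 0) (hK_top : ∀ s, ∫⁻ g, k (g • s) ∂lam ≠ ⊤) (c : S)
    (ρ : Measure S) [SFinite ρ] (hρ : ∀ g : G, ρ.map (g • ·) = ρ)
    {A : Set S} (hA : MeasurableSet A) :
    ρ A = (∫⁻ g, A.indicator (fun s => (∫⁻ g', k (g' • s) ∂lam)⁻¹) (g⁻¹ • c) ∂lam) *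
      ∫⁻ s, k s ∂ρ := by
  set F := A.indicator (fun s => (∫⁻ g', k (g' • s) ∂lam)⁻¹)
  have hF : Measurable F := (Measurable.inv (by fun_prop)).indicator hA
  calc ρ A = ∫⁻ s, F s * ∫⁻ g, k (g • s) ∂lam ∂ρ := by
        rw [← lintegral_indicator_one hA]
        refine lintegral_congr fun s => ?_
        by_cases hs : s ∈ A
        · simp [F, hs, ENNReal.inv_mul_cancel (hK₀ s) (hK_top s)]
        · simp [F, hs]
    _ = ∫⁻ t, (∫⁻ g, F (g⁻¹ • t) ∂lam) * k t ∂ρ :=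
        lintegral_mul_lintegral_comp_smul lam ρ hρ hF hk
    _ = ∫⁻ t, (∫⁻ g, F (g⁻¹ • c) ∂lam) * k t ∂ρ :=
        lintegral_congr fun t => by rw [lintegral_comp_inv_smul_eq lam F c t]
    _ = _ := lintegral_const_mul _ hk

theorem eq_smul_of_map_smul_eq (hk : Measurable k)
    (hK₀ : ∀ s, ∫⁻ g, k (g • s) ∂lam ≠ 0) (hK_top : ∀ s, ∫⁻ g, k (g • s) ∂lam ≠ ⊤)
    (ρ₁ ρ₂ : Measure S) [SFinite ρ₁] [SFinite ρ₂]
    (hρ₁ : ∀ g : G, ρ₁.map (g • ·) = ρ₁) (hρ₂ : ∀ g : G, ρ₂.map (g • ·) = ρ₂)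
    (h₀ : ∫⁻ s, k s ∂ρ₂ ≠ 0) (h_top : ∫⁻ s, k s ∂ρ₂ ≠ ⊤) :
    ρ₁ = ((∫⁻ s, k s ∂ρ₁) / ∫⁻ s, k s ∂ρ₂) • ρ₂ := by
  obtain ⟨c⟩ : Nonempty S := by
    contrapose! h₀
    simp
  ext A hA
  rw [Measure.smul_apply, smul_eq_mul, measure_eq_mul_lintegral lam hk hK₀ hK_top c ρ₁ hρ₁ hA,
    measure_eq_mul_lintegral lam hk hK₀ hK_top c ρ₂ hρ₂ hA, mul_left_comm,
    ENNReal.div_mul_cancel h₀ h_top]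

end

theorem map_map_smul_const_eq {G S : Type*} [Group G] [MeasurableSpace G] [MeasurableMul G]
    [MeasurableSpace S] [MulAction G S] [MeasurableSMul₂ G S]
    (lam : Measure G) [lam.IsMulLeftInvariant] (c : S) (g : G) :
    (lam.map (· • c)).map (g • ·) = lam.map (· • c) := by
  have hcomm : (g • ·) ∘ (· • c) = (· • c) ∘ (g * ·) := funext fun u => (mul_smul g u c).symm
  rw [Measure.map_map (by fun_prop) (by fun_prop), hcomm,
    ← Measure.map_map (by fun_prop) (by fun_prop), map_mul_left_eq_self]

theorem stmt_10_general {G S : Type*} [Group G] [TopologicalSpace G] [IsTopologicalGroup G]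
    [LocallyCompactSpace G] [SecondCountableTopology G]
    [MeasurableSpace G] [BorelSpace G]
    [MeasurableSpace S] [MulAction G S]
    (hact : Measurable fun p : G × S => p.1 • p.2)
    (lam : Measure G) [lam.IsHaarMeasure]
    (htrans : ∀ s t : S, ∃ g : G, g • s = t)
    -- properness
    (k : S → ℝ≥0∞) (hk : Measurable k) (hkpos : ∀ t, 0 < k t ∧ k t < ⊤)
    (hkfin : ∀ s : S, ∫⁻ g, k (g • s) ∂lam < ⊤)
    (c : S)
    (ν : Measure S) [SigmaFinite ν]
    (hν : ∀ g : G, Measure.map (fun t : S => g • t) ν = ν) :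
    ∃ C : ℝ≥0∞, ν = C • Measure.map (fun g : G => g • c) lam := by
  have : MeasurableSMul₂ G S := ⟨hact⟩
  have : MulAction.IsPretransitive G S := ⟨htrans⟩
  have hK₀ : ∀ s, ∫⁻ g, k (g • s) ∂lam ≠ 0 := fun s =>
    lintegral_ne_zero_of_forall_pos (by fun_prop) fun g => (hkpos _).1
  have hk_c : ∫⁻ s, k s ∂lam.map (· • c) = ∫⁻ g, k (g • c) ∂lam :=
    lintegral_map hk (by fun_prop)
  exact ⟨_, eq_smul_of_map_smul_eq lam hk hK₀ (fun s => (hkfin s).ne) ν _ hν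
    (map_map_smul_const_eq lam c) (hk_c ▸ hK₀ c) (hk_c ▸ (hkfin c).ne)⟩

/-- If a lcsc group `G` acts transitively and properly on a Borel space `S` with a point
`c` whose stabilizer is compact, then every σ-finite `G`-invariant measure `ν` on `S` is a
constant multiple of `μ_c = λ ∘ π_c⁻¹`. -/
theorem stmt_10 {G S : Type*} [Group G] [TopologicalSpace G] [IsTopologicalGroup G]
    [LocallyCompactSpace G] [SecondCountableTopology G] [T2Space G]
    [MeasurableSpace G] [BorelSpace G]
    [MeasurableSpace S] [StandardBorelSpace S] [MulAction G S]
    (hact : Measurable fun p : G × S => p.1 • p.2)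
    (lam : Measure G) [lam.IsHaarMeasure]
    (htrans : ∀ s t : S, ∃ g : G, g • s = t)
    -- properness
    (k : S → ℝ≥0∞) (hk : Measurable k) (hkpos : ∀ t, 0 < k t ∧ k t < ⊤)
    (hkfin : ∀ s : S, ∫⁻ g, k (g • s) ∂lam < ⊤)
    (c : S) (hc : IsCompact {g : G | g • c = c})
    (ν : Measure S) [SigmaFinite ν]
    (hν : ∀ g : G, Measure.map (fun t : S => g • t) ν = ν) :
    ∃ C : ℝ≥0∞, ν = C • Measure.map (fun g : G => g • c) lam :=
  stmt_10_general hact lam htrans k hk hkpos hkfin c ν hν
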